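/- Let M be a matching of maximum weight among all matchings of size n/3 in G. Then c(E_1) + c(E_2) + c(E_3) ≥ w(P*_6) + w(P*_8) + w(X_2) + w(X_3) + w(X_4) + w(X_5) + w(X_7) − (4/3)·w(M) + (1/3)·w(M'_1) + (2/3)·w(M''_1) + w(M'''_1) + (2/3)·w(M_2) + w(M_3) + (4/3)·w(M_4). -/
import Mathlib


open Finset
open scoped Classical

namespace MW3PP

/-- A 3-path `xyz`: a path on three distinct vertices with middle vertex `y`. -/
structure P3 (V : Type*) where
  x : V
  y : V
  z : V
  hxy : x ≠ y
  hyz : y ≠ z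
  hxz : x ≠ z

variable {V : Type*} [Fintype V] [DecidableEq V]

/-- The vertex set of a 3-path. -/
def P3.verts (p : P3 V) : Finset V := {p.x, p.y, p.z}

/-- The two edges of a 3-path. -/
def P3.edges (p : P3 V) : Finset (Sym2 V) := {s(p.x, p.y), s(p.y, p.z)}

/-- The weight of a 3-path. -/
def P3.wt (w : Sym2 V → ℝ) (p : P3 V) : ℝ := w s(p.x, p.y) + w s(p.y, p.z)

/-- The total weight of a set of edges. -/
def ew (w : Sym2 V → ℝ) (F : Finset (Sym2 V)) : ℝ := ∑ e ∈ F, w e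

/-- The total weight of a set of 3-paths. -/
def pw (w : Sym2 V → ℝ) (P : Finset (P3 V)) : ℝ := ∑ p ∈ P, p.wt w

/-- `∑_{xyz ∈ S} max (w (xy)) (w (yz))`. -/
def maxSum (w : Sym2 V → ℝ) (S : Finset (P3 V)) : ℝ :=
  ∑ p ∈ S, max (w s(p.x, p.y)) (w s(p.y, p.z))

/-- A perfect 3-path packing: `n/3` pairwise vertex-disjoint 3-paths covering all vertices. -/
def IsPacking (P : Finset (P3 V)) : Prop :=
  P.card = Fintype.card V / 3 ∧
  (∀ p ∈ P, ∀ q ∈ P, p ≠ q → Disjoint p.verts q.verts) ∧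
  (∀ v : V, ∃ p ∈ P, v ∈ p.verts)

/-- A maximum-weight perfect 3-path packing. -/
def IsMaxPacking (w : Sym2 V → ℝ) (P : Finset (P3 V)) : Prop :=
  IsPacking P ∧ ∀ Q : Finset (P3 V), IsPacking Q → pw w Q ≤ pw w P

/-- A matching: a set of pairwise vertex-disjoint (non-loop) edges. -/
def IsMatching (M : Finset (Sym2 V)) : Prop :=
  (∀ e ∈ M, ¬ e.IsDiag) ∧
  ∀ e ∈ M, ∀ f ∈ M, e ≠ f → ∀ v : V, v ∈ e → v ∉ f

/-- A maximum-weight matching among all matchings of size `k`. -/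
def IsMaxMatchingOfSize (w : Sym2 V → ℝ) (k : ℕ) (M : Finset (Sym2 V)) : Prop :=
  IsMatching M ∧ M.card = k ∧
  ∀ M' : Finset (Sym2 V), IsMatching M' → M'.card = k → ew w M' ≤ ew w M

/-- `v ∈ V(M)` : vertex `v` is covered by the matching `M`. -/
def covered (M : Finset (Sym2 V)) (v : V) : Prop := ∃ e ∈ M, v ∈ e

/-- `e_u` : the edge of `M` containing `u` (junk value if there is none). -/
noncomputable def eMatch (M : Finset (Sym2 V)) (u : V) : Sym2 V :=
  if h : ∃ e ∈ M, u ∈ e then h.choose else s(u, u)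

/-- The cost `c` of an edge with respect to a matching `M`:
`c(uv) = w(uv) - min (w (e_u)) (w (e_v))` if both endpoints are covered by `M`,
and `c(uv) = w(uv)` otherwise. -/
noncomputable def cost (w : Sym2 V → ℝ) (M : Finset (Sym2 V)) : Sym2 V → ℝ :=
  Sym2.lift ⟨fun u v =>
    if covered M u ∧ covered M v then
      w s(u, v) - min (w (eMatch M u)) (w (eMatch M v))
    else w s(u, v), by
      intro u v
      dsimp only
      by_cases h : covered M u ∧ covered M v
      · rw [if_pos h, if_pos (show covered M v ∧ covered M u from ⟨h.2, h.1⟩),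
          Sym2.eq_swap, min_comm]
      · rw [if_neg h, if_neg (show ¬(covered M v ∧ covered M u) from fun h' => h ⟨h'.2, h'.1⟩),
          Sym2.eq_swap]⟩

/-- The total cost of a set of edges. -/
noncomputable def cw (w : Sym2 V → ℝ) (M F : Finset (Sym2 V)) : ℝ := ∑ e ∈ F, cost w M e

/-- The number of vertices of the 3-path `p` covered by `M`. -/
noncomputable def kcnt (M : Finset (Sym2 V)) (p : P3 V) : ℕ :=
  (p.verts.filter fun v => covered M v).card

/-- Exactly one of the two edges of `p` lies in `M`. -/
def exOne (M : Finset (Sym2 V)) (p : P3 V) : Prop :=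
  (s(p.x, p.y) ∈ M ∧ s(p.y, p.z) ∉ M) ∨ (s(p.x, p.y) ∉ M ∧ s(p.y, p.z) ∈ M)

def cls1 (M : Finset (Sym2 V)) (p : P3 V) : Prop := kcnt M p = 0
def cls2 (M : Finset (Sym2 V)) (p : P3 V) : Prop := kcnt M p = 1 ∧ ¬ covered M p.y
def cls3 (M : Finset (Sym2 V)) (p : P3 V) : Prop := kcnt M p = 1 ∧ covered M p.y
def cls4 (M : Finset (Sym2 V)) (p : P3 V) : Prop := kcnt M p = 2 ∧ ¬ covered M p.y
def cls5 (M : Finset (Sym2 V)) (p : P3 V) : Prop := kcnt M p = 2 ∧ covered M p.y ∧ exOne M p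
def cls6 (M : Finset (Sym2 V)) (p : P3 V) : Prop :=
  kcnt M p = 2 ∧ covered M p.y ∧ s(p.x, p.y) ∉ M ∧ s(p.y, p.z) ∉ M
def cls7 (M : Finset (Sym2 V)) (p : P3 V) : Prop := kcnt M p = 3 ∧ exOne M p
def cls8 (M : Finset (Sym2 V)) (p : P3 V) : Prop :=
  kcnt M p = 3 ∧ s(p.x, p.y) ∉ M ∧ s(p.y, p.z) ∉ M

/-- The subset of a set of 3-paths satisfying a predicate. -/
noncomputable def psel (P : Finset (P3 V)) (c : P3 V → Prop) : Finset (P3 V) := P.filter c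

/-- The set of all edges of the 3-paths in `S`. -/
def Esub (S : Finset (P3 V)) : Finset (Sym2 V) := S.biUnion P3.edges

/-- The heaviest edge of a 3-path (the edge `xy` in case of a tie). -/
noncomputable def heavy (w : Sym2 V → ℝ) (p : P3 V) : Sym2 V :=
  if w s(p.y, p.z) ≤ w s(p.x, p.y) then s(p.x, p.y) else s(p.y, p.z)

noncomputable def X1 (w : Sym2 V → ℝ) (P : Finset (P3 V)) (M : Finset (Sym2 V)) :
    Finset (Sym2 V) := (psel P (cls1 M)).image (heavy w)
noncomputable def X2 (P : Finset (P3 V)) (M : Finset (Sym2 V)) : Finset (Sym2 V) :=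
  (psel P (cls2 M)).image fun p => if covered M p.x then s(p.x, p.y) else s(p.y, p.z)
noncomputable def X3 (w : Sym2 V → ℝ) (P : Finset (P3 V)) (M : Finset (Sym2 V)) :
    Finset (Sym2 V) := (psel P (cls3 M)).image (heavy w)
noncomputable def X4 (w : Sym2 V → ℝ) (P : Finset (P3 V)) (M : Finset (Sym2 V)) :
    Finset (Sym2 V) := (psel P (cls4 M)).image (heavy w)
noncomputable def X5 (P : Finset (P3 V)) (M : Finset (Sym2 V)) : Finset (Sym2 V) :=
  (psel P (cls5 M)).image fun p => if s(p.x, p.y) ∈ M then s(p.y, p.z) else s(p.x, p.y)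
noncomputable def X6 (P : Finset (P3 V)) (M : Finset (Sym2 V)) : Finset (Sym2 V) :=
  (psel P (cls6 M)).image fun p => if covered M p.x then s(p.y, p.z) else s(p.x, p.y)
noncomputable def X7 (P : Finset (P3 V)) (M : Finset (Sym2 V)) : Finset (Sym2 V) :=
  (psel P (cls7 M)).image fun p => if s(p.x, p.y) ∈ M then s(p.y, p.z) else s(p.x, p.y)
noncomputable def X8 (w : Sym2 V → ℝ) (P : Finset (P3 V)) (M : Finset (Sym2 V)) :
    Finset (Sym2 V) := (psel P (cls8 M)).image (heavy w)

noncomputable def Y1 (w : Sym2 V → ℝ) (P : Finset (P3 V)) (M : Finset (Sym2 V)) :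
    Finset (Sym2 V) := Esub (psel P (cls1 M)) \ X1 w P M
noncomputable def Y2 (P : Finset (P3 V)) (M : Finset (Sym2 V)) : Finset (Sym2 V) :=
  Esub (psel P (cls2 M)) \ X2 P M
noncomputable def Y3 (w : Sym2 V → ℝ) (P : Finset (P3 V)) (M : Finset (Sym2 V)) :
    Finset (Sym2 V) := Esub (psel P (cls3 M)) \ X3 w P M
noncomputable def Y4 (w : Sym2 V → ℝ) (P : Finset (P3 V)) (M : Finset (Sym2 V)) :
    Finset (Sym2 V) := Esub (psel P (cls4 M)) \ X4 w P M
noncomputable def Y5 (P : Finset (P3 V)) (M : Finset (Sym2 V)) : Finset (Sym2 V) :=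
  Esub (psel P (cls5 M)) \ X5 P M
noncomputable def Y6 (P : Finset (P3 V)) (M : Finset (Sym2 V)) : Finset (Sym2 V) :=
  Esub (psel P (cls6 M)) \ X6 P M
noncomputable def Y7 (P : Finset (P3 V)) (M : Finset (Sym2 V)) : Finset (Sym2 V) :=
  Esub (psel P (cls7 M)) \ X7 P M
noncomputable def Y8 (w : Sym2 V → ℝ) (P : Finset (P3 V)) (M : Finset (Sym2 V)) :
    Finset (Sym2 V) := Esub (psel P (cls8 M)) \ X8 w P M

/-- An edge is a middle edge (w.r.t. `M`) if exactly one of its endpoints lies in `V(M)`. -/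
def isMiddle (M : Finset (Sym2 V)) (e : Sym2 V) : Prop :=
  ∃ u v : V, e = s(u, v) ∧ covered M u ∧ ¬ covered M v

/-- Two edges share a vertex. -/
def shares (e f : Sym2 V) : Prop := ∃ v, v ∈ e ∧ v ∈ f

/-- `g` is a middle edge of some 3-path in `S`. -/
def middleIn (M : Finset (Sym2 V)) (S : Finset (P3 V)) (g : Sym2 V) : Prop :=
  (∃ p ∈ S, g ∈ p.edges) ∧ isMiddle M g

/-- The 3-paths of `P` lying in classes 2, 3 or 4. -/
noncomputable def P234 (P : Finset (P3 V)) (M : Finset (Sym2 V)) : Finset (P3 V) :=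
  psel P fun p => cls2 M p ∨ cls3 M p ∨ cls4 M p

/-- `M_1`: edges of `M` sharing a vertex with at least one middle edge of a 3-path of `P*_6`. -/
noncomputable def Mset1 (P : Finset (P3 V)) (M : Finset (Sym2 V)) : Finset (Sym2 V) :=
  M.filter fun f => ∃ g, middleIn M (psel P (cls6 M)) g ∧ shares f g

/-- `M_2`: edges of `M` sharing a vertex with at least one middle edge, all middle edges met
belonging to 3-paths of `P*_2 ∪ P*_3 ∪ P*_4`. -/
noncomputable def Mset2 (P : Finset (P3 V)) (M : Finset (Sym2 V)) : Finset (Sym2 V) :=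
  M.filter fun f =>
    (∃ g, middleIn M P g ∧ shares f g) ∧
    ∀ g, middleIn M P g → shares f g → middleIn M (P234 P M) g

/-- `M_3 = M ∩ E(P*_7)`. -/
noncomputable def Mset3 (P : Finset (P3 V)) (M : Finset (Sym2 V)) : Finset (Sym2 V) :=
  M ∩ Esub (psel P (cls7 M))

/-- `M_4 = M ∩ E(P*_5)`. -/
noncomputable def Mset4 (P : Finset (P3 V)) (M : Finset (Sym2 V)) : Finset (Sym2 V) :=
  M ∩ Esub (psel P (cls5 M))

/-- The middle edges of 3-paths of `P*_6`. -/
noncomputable def mid6 (P : Finset (P3 V)) (M : Finset (Sym2 V)) : Finset (Sym2 V) :=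
  (Esub (psel P (cls6 M))).filter (isMiddle M)

/-- `M'_1`: edges of `M_1` meeting exactly one middle edge of a 3-path of `P*_6` and
no middle edge of a 3-path of `P*_2 ∪ P*_3 ∪ P*_4`. -/
noncomputable def Mset1' (P : Finset (P3 V)) (M : Finset (Sym2 V)) : Finset (Sym2 V) :=
  (Mset1 P M).filter fun f =>
    ((mid6 P M).filter fun g => shares f g).card = 1 ∧
    ∀ g, middleIn M (P234 P M) g → ¬ shares f g

/-- `M''_1`: edges of `M_1` meeting two middle edges of 3-paths of `P*_6`. -/
noncomputable def Mset1'' (P : Finset (P3 V)) (M : Finset (Sym2 V)) : Finset (Sym2 V) :=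
  (Mset1 P M).filter fun f => ((mid6 P M).filter fun g => shares f g).card = 2

/-- `M'''_1`: edges of `M_1` meeting exactly one middle edge of a 3-path of `P*_6` and
at least one middle edge of a 3-path of `P*_2 ∪ P*_3 ∪ P*_4`. -/
noncomputable def Mset1''' (P : Finset (P3 V)) (M : Finset (Sym2 V)) : Finset (Sym2 V) :=
  (Mset1 P M).filter fun f =>
    ((mid6 P M).filter fun g => shares f g).card = 1 ∧
    ∃ g, middleIn M (P234 P M) g ∧ shares f g

/-- Assumption on `P*`: for every 3-path `xyz ∈ P*` with `y ∉ V(M)` and `x, z ∈ V(M)`,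
the vertices `x` and `z` lie in two distinct edges of `M`. -/
def Ass (P : Finset (P3 V)) (M : Finset (Sym2 V)) : Prop :=
  ∀ p ∈ P, ¬ covered M p.y → covered M p.x → covered M p.z →
    ∃ e ∈ M, ∃ f ∈ M, p.x ∈ e ∧ p.z ∈ f ∧ e ≠ f

/-- An admissible edge w.r.t. `M`: either both endpoints are in `V(M)` and lie in two distinct
edges of `M`, or exactly one endpoint is in `V(M)`. -/
def goodEdge (M : Finset (Sym2 V)) (e : Sym2 V) : Prop :=
  (∃ u v : V, e = s(u, v) ∧ covered M u ∧ covered M v ∧ ∀ f ∈ M, ¬(u ∈ f ∧ v ∈ f)) ∨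
  (∃ u v : V, e = s(u, v) ∧ covered M u ∧ ¬ covered M v)


set_option linter.unusedSectionVars false

section Aux
variable {V : Type*} [Fintype V] [DecidableEq V]

/-- the "defect" of an edge: `w e - cost e`. -/
noncomputable def dft (w : Sym2 V → ℝ) (M : Finset (Sym2 V)) (e : Sym2 V) : ℝ :=
  w e - cost w M e

lemma cost_mk (w : Sym2 V → ℝ) (M : Finset (Sym2 V)) (u v : V) :
    cost w M s(u, v) =
      if covered M u ∧ covered M v then
        w s(u, v) - min (w (eMatch M u)) (w (eMatch M v))
      else w s(u, v) := by
  rfl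

lemma dft_mk (w : Sym2 V → ℝ) (M : Finset (Sym2 V)) (u v : V) :
    dft w M s(u, v) =
      if covered M u ∧ covered M v then min (w (eMatch M u)) (w (eMatch M v)) else 0 := by
  rw [dft, cost_mk]; split_ifs <;> ring

lemma dft_nonneg (w : Sym2 V → ℝ) (hw : ∀ e, 0 ≤ w e) (M : Finset (Sym2 V)) (e : Sym2 V) :
    0 ≤ dft w M e := by
  induction e using Sym2.ind with
  | _ u v =>
    rw [dft_mk]
    split_ifs
    · exact le_min (hw _) (hw _)
    · exact le_refl 0

lemma dft_zero_left (w : Sym2 V → ℝ) (M : Finset (Sym2 V)) {u : V} (v : V)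
    (h : ¬ covered M u) : dft w M s(u, v) = 0 := by
  rw [dft_mk]; exact if_neg (fun hc => h hc.1)

lemma dft_zero_right (w : Sym2 V → ℝ) (M : Finset (Sym2 V)) (u : V) {v : V}
    (h : ¬ covered M v) : dft w M s(u, v) = 0 := by
  rw [dft_mk]; exact if_neg (fun hc => h hc.2)

lemma dft_le_comb (w : Sym2 V → ℝ) (hw : ∀ e, 0 ≤ w e) (M : Finset (Sym2 V)) (u v : V) :
    dft w M s(u, v) ≤ 1 / 3 * w (eMatch M u) + 2 / 3 * w (eMatch M v) ∧
    dft w M s(u, v) ≤ 1 / 3 * w (eMatch M v) + 2 / 3 * w (eMatch M u) := by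
  rw [dft_mk]
  split_ifs with h
  · have h1 := min_le_left (w (eMatch M u)) (w (eMatch M v))
    have h2 := min_le_right (w (eMatch M u)) (w (eMatch M v))
    constructor <;> linarith
  · constructor <;> [skip; skip] <;>
      nlinarith [hw (eMatch M u), hw (eMatch M v)]

lemma covered_of_mem {M : Finset (Sym2 V)} {f : Sym2 V} {u : V} (hf : f ∈ M) (hu : u ∈ f) :
    covered M u := ⟨f, hf, hu⟩

lemma eMatch_mem {M : Finset (Sym2 V)} {u : V} (h : covered M u) :
    eMatch M u ∈ M ∧ u ∈ eMatch M u := by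
  have h' : ∃ e ∈ M, u ∈ e := h
  rw [eMatch, dif_pos h']
  exact h'.choose_spec

lemma eMatch_eq {M : Finset (Sym2 V)} (hm : IsMatching M) {f : Sym2 V} {u : V}
    (hf : f ∈ M) (hu : u ∈ f) : eMatch M u = f := by
  have hc : covered M u := ⟨f, hf, hu⟩
  obtain ⟨he, hue⟩ := eMatch_mem hc
  by_contra hne
  exact hm.2 _ he f hf hne u hue hu

end Aux
section Aux2
variable {V : Type*} [Fintype V] [DecidableEq V]

lemma mem_verts_x (p : P3 V) : p.x ∈ p.verts := by simp [P3.verts]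
lemma mem_verts_y (p : P3 V) : p.y ∈ p.verts := by simp [P3.verts]
lemma mem_verts_z (p : P3 V) : p.z ∈ p.verts := by simp [P3.verts]

lemma mem_edges_iff {p : P3 V} {e : Sym2 V} :
    e ∈ p.edges ↔ e = s(p.x, p.y) ∨ e = s(p.y, p.z) := by
  simp [P3.edges]

lemma edges_ne (p : P3 V) : s(p.x, p.y) ≠ s(p.y, p.z) := by
  intro h
  rw [Sym2.eq_iff] at h
  rcases h with ⟨h1, h2⟩ | ⟨h1, h2⟩
  · exact p.hxy h1
  · exact p.hxz h1

lemma mem_verts_of_mem_edges {p : P3 V} {e : Sym2 V} {u : V}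
    (he : e ∈ p.edges) (hu : u ∈ e) : u ∈ p.verts := by
  rw [mem_edges_iff] at he
  rcases he with h | h <;> subst h <;> rw [Sym2.mem_iff] at hu <;>
    rcases hu with h | h <;> subst h <;> simp [P3.verts]

lemma path_eq {P : Finset (P3 V)}
    (hd : ∀ p ∈ P, ∀ q ∈ P, p ≠ q → Disjoint p.verts q.verts)
    {p q : P3 V} (hp : p ∈ P) (hq : q ∈ P) {v : V}
    (hvp : v ∈ p.verts) (hvq : v ∈ q.verts) : p = q := by
  by_contra hne
  exact (Finset.disjoint_left.1 (hd p hp q hq hne)) hvp hvq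

lemma kcnt_eq (M : Finset (Sym2 V)) (p : P3 V) :
    kcnt M p = (if covered M p.x then 1 else 0) + (if covered M p.y then 1 else 0) +
      (if covered M p.z then 1 else 0) := by
  have hxy := p.hxy; have hyz := p.hyz; have hxz := p.hxz
  rw [kcnt, P3.verts]
  rw [Finset.filter_insert, Finset.filter_insert, Finset.filter_singleton]
  split_ifs <;>
    simp_all [Finset.card_insert_of_notMem, Finset.mem_insert, Finset.mem_singleton,
      Finset.mem_filter]

lemma cov_all_of_k3 {M : Finset (Sym2 V)} {p : P3 V} (h : kcnt M p = 3) :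
    covered M p.x ∧ covered M p.y ∧ covered M p.z := by
  rw [kcnt_eq] at h
  split_ifs at h <;> simp_all

lemma cov_z_of_k2 {M : Finset (Sym2 V)} {p : P3 V} (h : kcnt M p = 2)
    (hy : covered M p.y) (hx : ¬ covered M p.x) : covered M p.z := by
  rw [kcnt_eq, if_pos hy, if_neg hx] at h
  split_ifs at h with h' <;> simp_all

lemma not_cov_z_of_k2 {M : Finset (Sym2 V)} {p : P3 V} (h : kcnt M p = 2)
    (hx : covered M p.x) (hy : covered M p.y) : ¬ covered M p.z := by
  rw [kcnt_eq, if_pos hy, if_pos hx] at h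
  split_ifs at h with h' <;> simp_all

lemma not_cov_x_of_k2 {M : Finset (Sym2 V)} {p : P3 V} (h : kcnt M p = 2)
    (hy : covered M p.y) (hz : covered M p.z) : ¬ covered M p.x := by
  rw [kcnt_eq, if_pos hy, if_pos hz] at h
  split_ifs at h with h' <;> simp_all

end Aux2
section Aux3
variable {V : Type*} [Fintype V] [DecidableEq V]

lemma cls6_not_cls7 {M : Finset (Sym2 V)} {p : P3 V} (h : cls6 M p) : ¬ cls7 M p :=
  fun h7 => by rw [cls6, h7.1] at h; simp at h

lemma cls6_not_cls8 {M : Finset (Sym2 V)} {p : P3 V} (h : cls6 M p) : ¬ cls8 M p :=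
  fun h8 => by rw [cls6, h8.1] at h; simp at h

lemma cls7_not_cls8 {M : Finset (Sym2 V)} {p : P3 V} (h : cls7 M p) : ¬ cls8 M p := by
  rintro ⟨-, hxy, hyz⟩
  rcases h.2 with ⟨h1, -⟩ | ⟨-, h2⟩
  · exact hxy h1
  · exact hyz h2

lemma cls234_facts {M : Finset (Sym2 V)} {p : P3 V}
    (h : cls2 M p ∨ cls3 M p ∨ cls4 M p) :
    ¬ cls5 M p ∧ ¬ cls6 M p ∧ ¬ cls7 M p ∧ ¬ cls8 M p := by
  rcases h with ⟨hk, hy⟩ | ⟨hk, hy⟩ | ⟨hk, hy⟩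
  · exact ⟨fun h' => by have := h'.1; omega, fun h' => by have := h'.1; omega,
      fun h' => by have := h'.1; omega, fun h' => by have := h'.1; omega⟩
  · exact ⟨fun h' => by have := h'.1; omega, fun h' => by have := h'.1; omega,
      fun h' => by have := h'.1; omega, fun h' => by have := h'.1; omega⟩
  · exact ⟨fun h' => hy h'.2.1, fun h' => hy h'.2.1,
      fun h' => by have := h'.1; omega, fun h' => by have := h'.1; omega⟩

lemma cls5_not_cls6 {M : Finset (Sym2 V)} {p : P3 V} (h : cls5 M p) : ¬ cls6 M p := by
  rintro ⟨-, -, h1, h2⟩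
  rcases h.2.2 with ⟨hm, -⟩ | ⟨-, hm⟩
  · exact h1 hm
  · exact h2 hm

lemma cls5_not_cls7 {M : Finset (Sym2 V)} {p : P3 V} (h : cls5 M p) : ¬ cls7 M p :=
  fun h7 => by rw [cls5, h7.1] at h; simp at h

lemma cls5_not_cls8 {M : Finset (Sym2 V)} {p : P3 V} (h : cls5 M p) : ¬ cls8 M p :=
  fun h8 => by rw [cls5, h8.1] at h; simp at h

/-- the local charge coefficient of path `p` at vertex `v`. -/
noncomputable def rloc (M : Finset (Sym2 V)) (p : P3 V) (v : V) : ℝ :=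
  if cls6 M p then
    (if v = p.y then 1/3 else 0) +
      (if v = (if covered M p.x then p.x else p.z) then 2/3 else 0)
  else if cls7 M p then
    (if v = p.y then 1/3 else 0) +
      (if v = (if s(p.x, p.y) ∈ M then p.z else p.x) then 2/3 else 0)
  else if cls8 M p then
    (if v = p.x then 2/3 else 0) + (if v = p.y then 2/3 else 0) +
      (if v = p.z then 2/3 else 0)
  else 0

lemma rloc_nonneg (M : Finset (Sym2 V)) (p : P3 V) (v : V) : 0 ≤ rloc M p v := by
  rw [rloc]; split_ifs <;> norm_num

lemma rloc_le (M : Finset (Sym2 V)) (p : P3 V) (v : V) : rloc M p v ≤ 2/3 := by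
  have hxy := p.hxy; have hyz := p.hyz; have hxz := p.hxz
  rw [rloc]
  split_ifs <;> norm_num <;> simp_all <;> linarith

lemma rloc_zero_of_notMem {M : Finset (Sym2 V)} {p : P3 V} {v : V}
    (h : v ∉ p.verts) : rloc M p v = 0 := by
  have hx : v ≠ p.x := fun hh => h (hh ▸ mem_verts_x p)
  have hy : v ≠ p.y := fun hh => h (hh ▸ mem_verts_y p)
  have hz : v ≠ p.z := fun hh => h (hh ▸ mem_verts_z p)
  rw [rloc]
  split_ifs <;> simp_all

lemma rloc_zero_of_not_covered {M : Finset (Sym2 V)} {p : P3 V} {v : V}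
    (h : ¬ covered M v) : rloc M p v = 0 := by
  by_cases h6 : cls6 M p
  · have hy : v ≠ p.y := fun hh => h (hh ▸ h6.2.1)
    have hc : covered M (if covered M p.x then p.x else p.z) := by
      split_ifs with hx
      · exact hx
      · exact cov_z_of_k2 h6.1 h6.2.1 hx
    have hc' : v ≠ (if covered M p.x then p.x else p.z) := fun hh => h (hh ▸ hc)
    rw [rloc, if_pos h6, if_neg hy, if_neg hc']
    norm_num
  · by_cases h7 : cls7 M p
    · obtain ⟨cx, cy, cz⟩ := cov_all_of_k3 h7.1
      have hy : v ≠ p.y := fun hh => h (hh ▸ cy)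
      have hsel : v ≠ (if s(p.x, p.y) ∈ M then p.z else p.x) := by
        split_ifs
        · exact fun hh => h (hh ▸ cz)
        · exact fun hh => h (hh ▸ cx)
      rw [rloc, if_neg h6, if_pos h7, if_neg hy, if_neg hsel]
      norm_num
    · by_cases h8 : cls8 M p
      · obtain ⟨cx, cy, cz⟩ := cov_all_of_k3 h8.1
        have hx : v ≠ p.x := fun hh => h (hh ▸ cx)
        have hy : v ≠ p.y := fun hh => h (hh ▸ cy)
        have hz : v ≠ p.z := fun hh => h (hh ▸ cz)
        rw [rloc, if_neg h6, if_neg h7, if_pos h8, if_neg hx, if_neg hy, if_neg hz]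
        norm_num
      · rw [rloc, if_neg h6, if_neg h7, if_neg h8]

/-- the total charge coefficient at vertex `v`. -/
noncomputable def rho (M : Finset (Sym2 V)) (P : Finset (P3 V)) (v : V) : ℝ :=
  ∑ p ∈ P, rloc M p v

lemma rho_eq {M : Finset (Sym2 V)} {P : Finset (P3 V)}
    (hd : ∀ p ∈ P, ∀ q ∈ P, p ≠ q → Disjoint p.verts q.verts)
    {p : P3 V} (hp : p ∈ P) {v : V} (hv : v ∈ p.verts) :
    rho M P v = rloc M p v := by
  rw [rho]
  refine Finset.sum_eq_single_of_mem p hp (fun q hq hne => ?_)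
  refine rloc_zero_of_notMem (fun hvq => ?_)
  exact hne (path_eq hd hq hp hvq hv)

lemma rho_nonneg (M : Finset (Sym2 V)) (P : Finset (P3 V)) (v : V) : 0 ≤ rho M P v :=
  Finset.sum_nonneg fun p _ => rloc_nonneg M p v

lemma rho_le {M : Finset (Sym2 V)} {P : Finset (P3 V)}
    (hd : ∀ p ∈ P, ∀ q ∈ P, p ≠ q → Disjoint p.verts q.verts)
    (hcov : ∀ v : V, ∃ p ∈ P, v ∈ p.verts) (v : V) : rho M P v ≤ 2/3 := by
  obtain ⟨p, hp, hv⟩ := hcov v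
  rw [rho_eq hd hp hv]
  exact rloc_le M p v

lemma rho_zero_of_not_covered {M : Finset (Sym2 V)} {P : Finset (P3 V)} {v : V}
    (h : ¬ covered M v) : rho M P v = 0 :=
  Finset.sum_eq_zero fun p _ => rloc_zero_of_not_covered h

lemma rho_zero_of_234 {M : Finset (Sym2 V)} {P : Finset (P3 V)}
    (hd : ∀ p ∈ P, ∀ q ∈ P, p ≠ q → Disjoint p.verts q.verts)
    {p : P3 V} (hp : p ∈ P) (hcls : cls2 M p ∨ cls3 M p ∨ cls4 M p)
    {v : V} (hv : v ∈ p.verts) : rho M P v = 0 := by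
  rw [rho_eq hd hp hv, rloc]
  obtain ⟨-, h6, h7, h8⟩ := cls234_facts hcls
  simp [h6, h7, h8]

/-- the per-path charge. -/
noncomputable def phi (w : Sym2 V → ℝ) (M : Finset (Sym2 V)) (p : P3 V) : ℝ :=
  ∑ v : V, rloc M p v * w (eMatch M v)

lemma phi_nonneg (w : Sym2 V → ℝ) (hw : ∀ e, 0 ≤ w e) (M : Finset (Sym2 V)) (p : P3 V) :
    0 ≤ phi w M p :=
  Finset.sum_nonneg fun v _ => mul_nonneg (rloc_nonneg M p v) (hw _)

end Aux3
section Aux4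
variable {V : Type*} [Fintype V] [DecidableEq V]
variable {w : Sym2 V → ℝ} {M : Finset (Sym2 V)} {p : P3 V}

lemma not_cov_xz_of_k1 (h : kcnt M p = 1) (hy : covered M p.y) :
    ¬ covered M p.x ∧ ¬ covered M p.z := by
  rw [kcnt_eq, if_pos hy] at h
  constructor <;> intro hc <;> rw [if_pos hc] at h <;> split_ifs at h <;> omega

lemma mem_left (u v : V) : u ∈ s(u, v) := by simp
lemma mem_right (u v : V) : v ∈ s(u, v) := by simp

lemma phi6 (h6 : cls6 M p) :
    phi w M p = 1/3 * w (eMatch M p.y) +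
      2/3 * w (eMatch M (if covered M p.x then p.x else p.z)) := by
  rw [phi]
  simp only [rloc, if_pos h6, add_mul, ite_mul, zero_mul, Finset.sum_add_distrib,
    Finset.sum_ite_eq', Finset.mem_univ, if_pos]

lemma phi7 (h7 : cls7 M p) (h6 : ¬ cls6 M p) :
    phi w M p = 1/3 * w (eMatch M p.y) +
      2/3 * w (eMatch M (if s(p.x, p.y) ∈ M then p.z else p.x)) := by
  rw [phi]
  simp only [rloc, if_neg h6, if_pos h7, add_mul, ite_mul, zero_mul,
    Finset.sum_add_distrib, Finset.sum_ite_eq', Finset.mem_univ, if_pos]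

lemma phi8 (h8 : cls8 M p) (h6 : ¬ cls6 M p) (h7 : ¬ cls7 M p) :
    phi w M p = 2/3 * w (eMatch M p.x) + 2/3 * w (eMatch M p.y) +
      2/3 * w (eMatch M p.z) := by
  rw [phi]
  simp only [rloc, if_neg h6, if_neg h7, if_pos h8, add_mul, ite_mul, zero_mul,
    Finset.sum_add_distrib, Finset.sum_ite_eq', Finset.mem_univ, if_pos]

lemma charge6 (hw : ∀ e, 0 ≤ w e) (h6 : cls6 M p) :
    dft w M s(p.x, p.y) + dft w M s(p.y, p.z) ≤ phi w M p := by
  rw [phi6 h6]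
  by_cases hx : covered M p.x
  · have hz : ¬ covered M p.z := not_cov_z_of_k2 h6.1 hx h6.2.1
    have h1 : dft w M s(p.y, p.z) = 0 := dft_zero_right w M p.y hz
    have h2 := (dft_le_comb w hw M p.x p.y).2
    rw [if_pos hx]
    linarith
  · have h1 : dft w M s(p.x, p.y) = 0 := dft_zero_left w M p.y hx
    have h2 := (dft_le_comb w hw M p.y p.z).1
    rw [if_neg hx]
    linarith

lemma charge8 (hw : ∀ e, 0 ≤ w e) (h8 : cls8 M p) (h6 : ¬ cls6 M p) (h7 : ¬ cls7 M p) :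
    dft w M s(p.x, p.y) + dft w M s(p.y, p.z) ≤ phi w M p := by
  rw [phi8 h8 h6 h7]
  have h1 := (dft_le_comb w hw M p.x p.y).2
  have h2 := (dft_le_comb w hw M p.y p.z).1
  linarith

lemma charge7 (hw : ∀ e, 0 ≤ w e) (h7 : cls7 M p) (h6 : ¬ cls6 M p) :
    dft w M (if s(p.x, p.y) ∈ M then s(p.y, p.z) else s(p.x, p.y)) ≤ phi w M p := by
  rw [phi7 h7 h6]
  by_cases hxy : s(p.x, p.y) ∈ M
  · rw [if_pos hxy, if_pos hxy]
    exact (dft_le_comb w hw M p.y p.z).1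
  · rw [if_neg hxy, if_neg hxy]
    exact (dft_le_comb w hw M p.x p.y).2

lemma dft_X2sel (h : cls2 M p) :
    dft w M (if covered M p.x then s(p.x, p.y) else s(p.y, p.z)) = 0 := by
  split_ifs
  · exact dft_zero_right w M p.x h.2
  · exact dft_zero_left w M p.z h.2

lemma dft_X3sel (h : cls3 M p) : dft w M (heavy w p) = 0 := by
  obtain ⟨hx, hz⟩ := not_cov_xz_of_k1 h.1 h.2
  rw [heavy]
  split_ifs
  · exact dft_zero_left w M p.y hx
  · exact dft_zero_right w M p.y hz

lemma dft_X4sel (h : cls4 M p) : dft w M (heavy w p) = 0 := by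
  rw [heavy]
  split_ifs
  · exact dft_zero_right w M p.x h.2
  · exact dft_zero_left w M p.z h.2

lemma dft_X5sel (h : cls5 M p) :
    dft w M (if s(p.x, p.y) ∈ M then s(p.y, p.z) else s(p.x, p.y)) = 0 := by
  by_cases hxy : s(p.x, p.y) ∈ M
  · have hx : covered M p.x := covered_of_mem hxy (mem_left _ _)
    have hz : ¬ covered M p.z := not_cov_z_of_k2 h.1 hx h.2.1
    rw [if_pos hxy]
    exact dft_zero_right w M p.y hz
  · have hyz : s(p.y, p.z) ∈ M := by
      rcases h.2.2 with ⟨h1, -⟩ | ⟨-, h2⟩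
      · exact absurd h1 hxy
      · exact h2
    have hz : covered M p.z := covered_of_mem hyz (mem_right _ _)
    have hx : ¬ covered M p.x := not_cov_x_of_k2 h.1 h.2.1 hz
    rw [if_neg hxy]
    exact dft_zero_left w M p.y hx

end Aux4
section Aux5
variable {V : Type*} [Fintype V] [DecidableEq V]
variable {M : Finset (Sym2 V)} {p q : P3 V}

lemma isMiddle_not_cov {u v : V} (h : isMiddle M s(u, v)) (hv : covered M v) :
    ¬ covered M u := by
  obtain ⟨a, b, hg, ca, cb⟩ := h
  rw [Sym2.eq_iff] at hg
  rcases hg with ⟨h1, h2⟩ | ⟨h1, h2⟩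
  · subst h1; subst h2; exact absurd hv cb
  · subst h1; subst h2; exact cb

lemma isMiddle_not_cov' {u v : V} (h : isMiddle M s(u, v)) (hu : covered M u) :
    ¬ covered M v := by
  rw [Sym2.eq_swap] at h
  exact isMiddle_not_cov h hu

lemma cov_of_mem_verts_k3 (h : kcnt M p = 3) {u : V} (hu : u ∈ p.verts) :
    covered M u := by
  obtain ⟨cx, cy, cz⟩ := cov_all_of_k3 h
  rw [P3.verts, Finset.mem_insert, Finset.mem_insert, Finset.mem_singleton] at hu
  rcases hu with h | h | h <;> subst h <;> assumption

lemma no_middle_of_k3 (h : kcnt M p = 3) {g : Sym2 V} (hg : g ∈ p.edges)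
    (hm : isMiddle M g) : False := by
  obtain ⟨a, b, hgeq, ca, cb⟩ := hm
  subst hgeq
  exact cb (cov_of_mem_verts_k3 h (mem_verts_of_mem_edges hg (mem_right a b)))

lemma mid6_cov_eq_y (h6 : cls6 M q) {g : Sym2 V} (hg : g ∈ q.edges)
    (hm : isMiddle M g) {u : V} (hu : u ∈ g) (hc : covered M u) : u = q.y := by
  rw [mem_edges_iff] at hg
  rcases hg with h | h <;> subst h <;> rw [Sym2.mem_iff] at hu
  · have hx : ¬ covered M q.x := isMiddle_not_cov hm h6.2.1
    rcases hu with h | h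
    · exact absurd (h ▸ hc) hx
    · exact h
  · have hz : ¬ covered M q.z := isMiddle_not_cov' hm h6.2.1
    rcases hu with h | h
    · exact h
    · exact absurd (h ▸ hc) hz

lemma mid6_unique (h6 : cls6 M q) {g g' : Sym2 V} (hg : g ∈ q.edges)
    (hg' : g' ∈ q.edges) (hm : isMiddle M g) (hm' : isMiddle M g') : g = g' := by
  rw [mem_edges_iff] at hg hg'
  rcases hg with h | h <;> rcases hg' with h' | h' <;> subst h <;> subst h' <;> try rfl
  · have hx : ¬ covered M q.x := isMiddle_not_cov hm h6.2.1
    have hz : ¬ covered M q.z := isMiddle_not_cov' hm' h6.2.1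
    have hk := kcnt_eq M q
    rw [if_neg hx, if_neg hz, if_pos h6.2.1, h6.1] at hk
    omega
  · have hx : ¬ covered M q.x := isMiddle_not_cov hm' h6.2.1
    have hz : ¬ covered M q.z := isMiddle_not_cov' hm h6.2.1
    have hk := kcnt_eq M q
    rw [if_neg hx, if_neg hz, if_pos h6.2.1, h6.1] at hk
    omega

end Aux5
section Aux6
variable {V : Type*} [Fintype V] [DecidableEq V]
variable {M : Finset (Sym2 V)} {P : Finset (P3 V)}

lemma Mset1'_subset : Mset1' P M ⊆ Mset1 P M := Finset.filter_subset _ _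
lemma Mset1''_subset : Mset1'' P M ⊆ Mset1 P M := Finset.filter_subset _ _
lemma Mset1'''_subset : Mset1''' P M ⊆ Mset1 P M := Finset.filter_subset _ _

lemma mset1_struct {f : Sym2 V} {a b : V} (hfM : f ∈ M) (hf : f = s(a, b))
    (h1 : f ∈ Mset1 P M) :
    ∃ u q, (u = a ∨ u = b) ∧ q ∈ P ∧ cls6 M q ∧ u ∈ q.verts ∧ u = q.y := by
  obtain ⟨-, g, ⟨⟨q, hq, hgq⟩, hmid⟩, hsh⟩ := Finset.mem_filter.1 h1
  obtain ⟨hqP, h6⟩ := Finset.mem_filter.1 hq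
  obtain ⟨v, hvf, hvg⟩ := hsh
  have hvab : v = a ∨ v = b := by
    rw [hf, Sym2.mem_iff] at hvf
    exact hvf
  have hcv : covered M v := covered_of_mem hfM hvf
  exact ⟨v, q, hvab, hqP, h6, mem_verts_of_mem_edges hgq hvg,
    mid6_cov_eq_y h6 hgq hmid hvg hcv⟩

lemma mid234_struct {f : Sym2 V} {a b : V} (hfM : f ∈ M) (hf : f = s(a, b))
    {g : Sym2 V} (hg : middleIn M (P234 P M) g) (hsh : shares f g) :
    ∃ u q, (u = a ∨ u = b) ∧ q ∈ P ∧ (cls2 M q ∨ cls3 M q ∨ cls4 M q) ∧ u ∈ q.verts := by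
  obtain ⟨⟨q, hq, hgq⟩, -⟩ := hg
  simp only [P234, psel, Finset.mem_filter] at hq
  obtain ⟨hqP, hcls⟩ := hq
  obtain ⟨v, hvf, hvg⟩ := hsh
  have hvab : v = a ∨ v = b := by
    rw [hf, Sym2.mem_iff] at hvf
    exact hvf
  exact ⟨v, q, hvab, hqP, hcls, mem_verts_of_mem_edges hgq hvg⟩

lemma middleIn_psel6_to_P (hg : middleIn M (psel P (cls6 M)) g) : middleIn M P g := by
  obtain ⟨⟨q, hq, hgq⟩, hmid⟩ := hg
  exact ⟨⟨q, (Finset.mem_filter.1 hq).1, hgq⟩, hmid⟩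

/-- In `Mset2`, an edge cannot also be in `Mset1`. -/
lemma not_mset1_of_mset2
    (hd : ∀ p ∈ P, ∀ q ∈ P, p ≠ q → Disjoint p.verts q.verts)
    {f : Sym2 V} (h2 : f ∈ Mset2 P M) : f ∉ Mset1 P M := by
  intro h1
  obtain ⟨-, g, hgmid, hsh⟩ := Finset.mem_filter.1 h1
  obtain ⟨-, -, hall⟩ := Finset.mem_filter.1 h2
  have h234 := hall g (middleIn_psel6_to_P hgmid) hsh
  obtain ⟨⟨q6, hq6, hgq6⟩, hmid⟩ := hgmid
  obtain ⟨hq6P, h6⟩ := Finset.mem_filter.1 hq6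
  obtain ⟨⟨q', hq', hgq'⟩, -⟩ := h234
  simp only [P234, psel, Finset.mem_filter] at hq'
  obtain ⟨hq'P, hcls⟩ := hq'
  obtain ⟨u0, v0, hgeq, -, -⟩ := hmid
  have hu6 : u0 ∈ q6.verts := mem_verts_of_mem_edges hgq6 (hgeq ▸ mem_left u0 v0)
  have hu' : u0 ∈ q'.verts := mem_verts_of_mem_edges hgq' (hgeq ▸ mem_left u0 v0)
  exact (cls234_facts hcls).2.1 (path_eq hd hq6P hq'P hu6 hu' ▸ h6)

lemma rho_third (hd : ∀ p ∈ P, ∀ q ∈ P, p ≠ q → Disjoint p.verts q.verts)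
    {q : P3 V} (hq : q ∈ P) (h6 : cls6 M q) : rho M P q.y = 1/3 := by
  rw [rho_eq hd hq (mem_verts_y q), rloc, if_pos h6, if_pos rfl]
  have : q.y ≠ (if covered M q.x then q.x else q.z) := by
    split_ifs
    · exact q.hxy.symm
    · exact q.hyz
  rw [if_neg this]
  norm_num

lemma rho_cls5 (hd : ∀ p ∈ P, ∀ q ∈ P, p ≠ q → Disjoint p.verts q.verts)
    {q : P3 V} (hq : q ∈ P) (h5 : cls5 M q) {v : V} (hv : v ∈ q.verts) :
    rho M P v = 0 := by
  rw [rho_eq hd hq hv, rloc, if_neg (cls5_not_cls6 h5), if_neg (cls5_not_cls7 h5),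
    if_neg (cls5_not_cls8 h5)]

lemma rho_cls7_y (hd : ∀ p ∈ P, ∀ q ∈ P, p ≠ q → Disjoint p.verts q.verts)
    {q : P3 V} (hq : q ∈ P) (h7 : cls7 M q) : rho M P q.y = 1/3 := by
  have h6 : ¬ cls6 M q := fun h => cls6_not_cls7 h h7
  rw [rho_eq hd hq (mem_verts_y q), rloc, if_neg h6, if_pos h7, if_pos rfl]
  have : q.y ≠ (if s(q.x, q.y) ∈ M then q.z else q.x) := by
    split_ifs
    · exact q.hyz
    · exact q.hxy.symm
  rw [if_neg this]
  norm_num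

lemma rho_cls7_x (hd : ∀ p ∈ P, ∀ q ∈ P, p ≠ q → Disjoint p.verts q.verts)
    {q : P3 V} (hq : q ∈ P) (h7 : cls7 M q) (hxyM : s(q.x, q.y) ∈ M) :
    rho M P q.x = 0 := by
  have h6 : ¬ cls6 M q := fun h => cls6_not_cls7 h h7
  rw [rho_eq hd hq (mem_verts_x q), rloc, if_neg h6, if_pos h7, if_neg q.hxy,
    if_pos hxyM, if_neg q.hxz]
  norm_num

lemma rho_cls7_z (hd : ∀ p ∈ P, ∀ q ∈ P, p ≠ q → Disjoint p.verts q.verts)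
    {q : P3 V} (hq : q ∈ P) (h7 : cls7 M q) (hxyM : s(q.x, q.y) ∉ M) :
    rho M P q.z = 0 := by
  have h6 : ¬ cls6 M q := fun h => cls6_not_cls7 h h7
  rw [rho_eq hd hq (mem_verts_z q), rloc, if_neg h6, if_pos h7, if_neg q.hyz.symm,
    if_neg hxyM, if_neg (Ne.symm q.hxz)]
  norm_num

/-- If `b` is not the middle vertex of a class-6 path, then all elements of the
`mid6`-filter at `s(a,b)` coincide. -/
lemma mid6_filter_all_eq
    (hd : ∀ p ∈ P, ∀ q ∈ P, p ≠ q → Disjoint p.verts q.verts)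
    {a b : V} (hfM : s(a, b) ∈ M)
    (hnb : ¬ ∃ q ∈ P, cls6 M q ∧ b ∈ q.verts ∧ b = q.y)
    {pa : P3 V} (hpa : pa ∈ P) (hapa : a ∈ pa.verts) :
    ∀ g ∈ (mid6 P M).filter (fun g => shares s(a, b) g),
      ∀ g' ∈ (mid6 P M).filter (fun g => shares s(a, b) g), g = g' := by
  have main : ∀ g ∈ (mid6 P M).filter (fun g => shares s(a, b) g),
      g ∈ pa.edges ∧ cls6 M pa ∧ isMiddle M g := by
    intro g hg
    obtain ⟨hgm, hsh⟩ := Finset.mem_filter.1 hg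
    obtain ⟨hgE, hmid⟩ := Finset.mem_filter.1 hgm
    obtain ⟨q, hq, hgq⟩ := Finset.mem_biUnion.1 hgE
    obtain ⟨hqP, h6⟩ := Finset.mem_filter.1 hq
    obtain ⟨v, hvf, hvg⟩ := hsh
    have hcv : covered M v := covered_of_mem hfM hvf
    have hvy : v = q.y := mid6_cov_eq_y h6 hgq hmid hvg hcv
    have hvq : v ∈ q.verts := mem_verts_of_mem_edges hgq hvg
    rw [Sym2.mem_iff] at hvf
    rcases hvf with rfl | rfl
    · have : q = pa := path_eq hd hqP hpa hvq hapa
      subst this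
      exact ⟨hgq, h6, hmid⟩
    · exact absurd ⟨q, hqP, h6, hvq, hvy⟩ hnb
  intro g hg g' hg'
  obtain ⟨h1, h2, h3⟩ := main g hg
  obtain ⟨h1', -, h3'⟩ := main g' hg'
  exact mid6_unique h2 h1 h1' h3 h3'

end Aux6
section Aux7
variable {V : Type*} [Fintype V] [DecidableEq V]
variable {w : Sym2 V → ℝ} {M : Finset (Sym2 V)} {P : Finset (P3 V)}

lemma key_f (hm : IsMatching M)
    (hd : ∀ p ∈ P, ∀ q ∈ P, p ≠ q → Disjoint p.verts q.verts)
    (hcov : ∀ v : V, ∃ p ∈ P, v ∈ p.verts)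
    (hw : ∀ e, 0 ≤ w e) (f : Sym2 V) (hf : f ∈ M) :
    (∑ v ∈ (Finset.univ.filter (covered M)).filter (fun v => eMatch M v = f),
        rho M P v * w (eMatch M v))
      + (1/3) * (if f ∈ Mset1' P M then w f else 0)
      + (2/3) * (if f ∈ Mset1'' P M then w f else 0)
      + (if f ∈ Mset1''' P M then w f else 0)
      + (2/3) * (if f ∈ Mset2 P M then w f else 0)
      + (if f ∈ Mset3 P M then w f else 0)
      + (4/3) * (if f ∈ Mset4 P M then w f else 0)
      ≤ 4/3 * w f := by
  revert hf
  induction f using Sym2.ind with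
  | _ a b =>
  intro hf
  have hab : a ≠ b := fun h => (hm.1 _ hf) ((Sym2.mk_isDiag_iff).2 h)
  have cova : covered M a := covered_of_mem hf (mem_left a b)
  have covb : covered M b := covered_of_mem hf (mem_right a b)
  have ea : eMatch M a = s(a, b) := eMatch_eq hm hf (mem_left a b)
  have eb : eMatch M b = s(a, b) := eMatch_eq hm hf (mem_right a b)
  have hfib : (Finset.univ.filter (covered M)).filter (fun v => eMatch M v = s(a, b))
      = {a, b} := by
    ext v
    simp only [Finset.mem_filter, Finset.mem_univ, true_and, Finset.mem_insert,
      Finset.mem_singleton]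
    constructor
    · rintro ⟨hcv, hev⟩
      have hvmem : v ∈ s(a, b) := hev ▸ (eMatch_mem hcv).2
      rwa [Sym2.mem_iff] at hvmem
    · rintro (rfl | rfl)
      exacts [⟨cova, ea⟩, ⟨covb, eb⟩]
  rw [hfib, Finset.sum_pair hab, ea, eb]
  set W := w s(a, b) with hWdef
  have hW : 0 ≤ W := hw _
  have hrle_a : rho M P a ≤ 2/3 := rho_le hd hcov a
  have hrle_b : rho M P b ≤ 2/3 := rho_le hd hcov b
  obtain ⟨pa, hpa, hapa⟩ := hcov a
  obtain ⟨pb, hpb, hbpb⟩ := hcov b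
  by_cases h4 : s(a, b) ∈ Mset4 P M
  · -- class-5 matching edge: rho = 0 on both endpoints, no other corrections
    obtain ⟨-, hE⟩ := Finset.mem_inter.1 h4
    obtain ⟨q, hq, hfq⟩ := Finset.mem_biUnion.1 hE
    obtain ⟨hqP, h5⟩ := Finset.mem_filter.1 hq
    have haq : a ∈ q.verts := mem_verts_of_mem_edges hfq (mem_left a b)
    have hbq : b ∈ q.verts := mem_verts_of_mem_edges hfq (mem_right a b)
    have hra : rho M P a = 0 := rho_cls5 hd hqP h5 haq
    have hrb : rho M P b = 0 := rho_cls5 hd hqP h5 hbq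
    have hn1 : s(a, b) ∉ Mset1 P M := by
      intro h1
      obtain ⟨u, q6, hu, hq6P, h6, huq6, -⟩ := mset1_struct hf rfl h1
      have huq : u ∈ q.verts := by rcases hu with rfl | rfl <;> assumption
      exact cls5_not_cls6 h5 (path_eq hd hq6P hqP huq6 huq ▸ h6)
    have hn2 : s(a, b) ∉ Mset2 P M := by
      intro h2
      obtain ⟨-, ⟨g, hgmid, hgsh⟩, hall⟩ := Finset.mem_filter.1 h2
      obtain ⟨u, q', hu, hq'P, hcls, huq'⟩ := mid234_struct hf rfl
        (hall g hgmid hgsh) hgsh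
      have huq : u ∈ q.verts := by rcases hu with rfl | rfl <;> assumption
      exact (cls234_facts hcls).1 (path_eq hd hq'P hqP huq' huq ▸ h5)
    have hn3 : s(a, b) ∉ Mset3 P M := by
      intro h3
      obtain ⟨-, hE7⟩ := Finset.mem_inter.1 h3
      obtain ⟨q7, hq7, hfq7⟩ := Finset.mem_biUnion.1 hE7
      obtain ⟨hq7P, h7⟩ := Finset.mem_filter.1 hq7
      have haq7 : a ∈ q7.verts := mem_verts_of_mem_edges hfq7 (mem_left a b)
      exact cls5_not_cls7 h5 (path_eq hd hq7P hqP haq7 haq ▸ h7)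
    rw [if_pos h4, if_neg hn3, if_neg hn2, if_neg (fun h => hn1 (Mset1'_subset h)),
      if_neg (fun h => hn1 (Mset1''_subset h)), if_neg (fun h => hn1 (Mset1'''_subset h)),
      hra, hrb]
    linarith
  · by_cases h3 : s(a, b) ∈ Mset3 P M
    · obtain ⟨-, hE7⟩ := Finset.mem_inter.1 h3
      obtain ⟨q, hq, hfq⟩ := Finset.mem_biUnion.1 hE7
      obtain ⟨hqP, h7⟩ := Finset.mem_filter.1 hq
      have haq : a ∈ q.verts := mem_verts_of_mem_edges hfq (mem_left a b)
      have hbq : b ∈ q.verts := mem_verts_of_mem_edges hfq (mem_right a b)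
      have hn1 : s(a, b) ∉ Mset1 P M := by
        intro h1
        obtain ⟨u, q6, hu, hq6P, h6, huq6, -⟩ := mset1_struct hf rfl h1
        have huq : u ∈ q.verts := by rcases hu with rfl | rfl <;> assumption
        exact cls6_not_cls7 (path_eq hd hq6P hqP huq6 huq ▸ h6) h7
      have hn2 : s(a, b) ∉ Mset2 P M := by
        intro h2
        obtain ⟨-, ⟨g, hgmid, hgsh⟩, -⟩ := Finset.mem_filter.1 h2
        obtain ⟨⟨q'', hq''P, hgq''⟩, hmid⟩ := hgmid
        obtain ⟨v, hvf, hvg⟩ := hgsh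
        have hvq'' : v ∈ q''.verts := mem_verts_of_mem_edges hgq'' hvg
        have hvq : v ∈ q.verts := by
          rw [Sym2.mem_iff] at hvf
          rcases hvf with rfl | rfl <;> assumption
        exact no_middle_of_k3 h7.1 ((path_eq hd hq''P hqP hvq'' hvq) ▸ hgq'') hmid
      have hsum : rho M P a + rho M P b = 1/3 := by
        rw [mem_edges_iff] at hfq
        rcases hfq with hcase | hcase
        · have hxyM : s(q.x, q.y) ∈ M := hcase ▸ hf
          have hx := rho_cls7_x hd hqP h7 hxyM
          have hy := rho_cls7_y hd hqP h7
          rw [Sym2.eq_iff] at hcase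
          rcases hcase with ⟨rfl, rfl⟩ | ⟨rfl, rfl⟩ <;> rw [hx, hy] <;> ring
        · have hyzM : s(q.y, q.z) ∈ M := hcase ▸ hf
          have hxyn : s(q.x, q.y) ∉ M := by
            rcases h7.2 with ⟨-, hn⟩ | ⟨hn, -⟩
            · exact absurd hyzM hn
            · exact hn
          have hz := rho_cls7_z hd hqP h7 hxyn
          have hy := rho_cls7_y hd hqP h7
          rw [Sym2.eq_iff] at hcase
          rcases hcase with ⟨rfl, rfl⟩ | ⟨rfl, rfl⟩ <;> rw [hz, hy] <;> ring
      rw [if_pos h3, if_neg h4, if_neg hn2, if_neg (fun h => hn1 (Mset1'_subset h)),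
        if_neg (fun h => hn1 (Mset1''_subset h)), if_neg (fun h => hn1 (Mset1'''_subset h))]
      have hmul := mul_le_mul_of_nonneg_right hsum.le hW
      linarith
    · by_cases h2 : s(a, b) ∈ Mset2 P M
      · have hn1 : s(a, b) ∉ Mset1 P M := not_mset1_of_mset2 hd h2
        have hsum : rho M P a + rho M P b ≤ 2/3 := by
          obtain ⟨-, ⟨g, hgmid, hgsh⟩, hall⟩ := Finset.mem_filter.1 h2
          obtain ⟨u, q', hu, hq'P, hcls, huq'⟩ := mid234_struct hf rfl
            (hall g hgmid hgsh) hgsh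
          have hru : rho M P u = 0 := rho_zero_of_234 hd hq'P hcls huq'
          have hra' := rho_nonneg M P a
          have hrb' := rho_nonneg M P b
          rcases hu with rfl | rfl <;> linarith
        rw [if_pos h2, if_neg h4, if_neg h3, if_neg (fun h => hn1 (Mset1'_subset h)),
          if_neg (fun h => hn1 (Mset1''_subset h)), if_neg (fun h => hn1 (Mset1'''_subset h))]
        have hmul := mul_le_mul_of_nonneg_right hsum hW
        linarith
      · by_cases h1'' : s(a, b) ∈ Mset1'' P M
        · have hcard2 : ((mid6 P M).filter (fun g => shares s(a, b) g)).card = 2 :=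
            (Finset.mem_filter.1 h1'').2
          have hn1' : s(a, b) ∉ Mset1' P M := by
            intro h
            have := (Finset.mem_filter.1 h).2.1
            omega
          have hn1''' : s(a, b) ∉ Mset1''' P M := by
            intro h
            have := (Finset.mem_filter.1 h).2.1
            omega
          have hA : ∃ q ∈ P, cls6 M q ∧ a ∈ q.verts ∧ a = q.y := by
            by_contra hnA
            have hf' : s(b, a) ∈ M := by rw [Sym2.eq_swap]; exact hf
            have hseteq : (mid6 P M).filter (fun g => shares s(a, b) g)
                = (mid6 P M).filter (fun g => shares s(b, a) g) := by
              rw [Sym2.eq_swap]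
            have hax : ((mid6 P M).filter (fun g => shares s(a, b) g)).card ≤ 1 := by
              apply Finset.card_le_one.2
              rw [hseteq]
              exact mid6_filter_all_eq hd hf' hnA hpb hbpb
            omega
          have hB : ∃ q ∈ P, cls6 M q ∧ b ∈ q.verts ∧ b = q.y := by
            by_contra hnB
            have hbx : ((mid6 P M).filter (fun g => shares s(a, b) g)).card ≤ 1 := by
              apply Finset.card_le_one.2
              exact mid6_filter_all_eq hd hf hnB hpa hapa
            omega
          obtain ⟨qa, hqaP, h6a, haqa, hay⟩ := hA
          obtain ⟨qb, hqbP, h6b, hbqb, hby⟩ := hB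
          have hra : rho M P a = 1/3 := by rw [hay]; exact rho_third hd hqaP h6a
          have hrb : rho M P b = 1/3 := by rw [hby]; exact rho_third hd hqbP h6b
          rw [if_pos h1'', if_neg h4, if_neg h3, if_neg h2, if_neg hn1', if_neg hn1''',
            hra, hrb]
          linarith
        · by_cases h1''' : s(a, b) ∈ Mset1''' P M
          · have hn1' : s(a, b) ∉ Mset1' P M := by
              intro h
              obtain ⟨g', hg'mid, hg'sh⟩ := (Finset.mem_filter.1 h1''').2.2
              exact (Finset.mem_filter.1 h).2.2 g' hg'mid hg'sh
            obtain ⟨u, qu, hu, hquP, h6u, huqu, huy⟩ :=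
              mset1_struct hf rfl (Mset1'''_subset h1''')
            obtain ⟨g', hg'mid, hg'sh⟩ := (Finset.mem_filter.1 h1''').2.2
            obtain ⟨u', q', hu', hq'P, hcls', hu'q'⟩ := mid234_struct hf rfl hg'mid hg'sh
            have hru : rho M P u = 1/3 := by rw [huy]; exact rho_third hd hquP h6u
            have hru' : rho M P u' = 0 := rho_zero_of_234 hd hq'P hcls' hu'q'
            have hune : u ≠ u' := by
              rintro rfl
              exact (cls234_facts hcls').2.1 (path_eq hd hquP hq'P huqu hu'q' ▸ h6u)
            have hsum : rho M P a + rho M P b = 1/3 := by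
              rcases hu with rfl | rfl <;> rcases hu' with rfl | rfl
              · exact absurd rfl hune
              · rw [hru, hru']; ring
              · rw [hru, hru']; ring
              · exact absurd rfl hune
            rw [if_pos h1''', if_neg h4, if_neg h3, if_neg h2, if_neg h1'', if_neg hn1']
            have hmul := mul_le_mul_of_nonneg_right hsum.le hW
            linarith
          · by_cases h1' : s(a, b) ∈ Mset1' P M
            · obtain ⟨u, qu, hu, hquP, h6u, huqu, huy⟩ :=
                mset1_struct hf rfl (Mset1'_subset h1')
              have hru : rho M P u = 1/3 := by rw [huy]; exact rho_third hd hquP h6u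
              have hsum : rho M P a + rho M P b ≤ 1 := by
                rcases hu with rfl | rfl <;> linarith
              rw [if_pos h1', if_neg h4, if_neg h3, if_neg h2, if_neg h1'', if_neg h1''']
              have hmul := mul_le_mul_of_nonneg_right hsum hW
              linarith
            · rw [if_neg h1', if_neg h4, if_neg h3, if_neg h2, if_neg h1'', if_neg h1''']
              have hsum : rho M P a + rho M P b ≤ 4/3 := by linarith
              have hmul := mul_le_mul_of_nonneg_right hsum hW
              linarith

end Aux7
section Aux8
variable {V : Type*} [Fintype V] [DecidableEq V]
variable {w : Sym2 V → ℝ} {M : Finset (Sym2 V)} {P : Finset (P3 V)}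

lemma y_mem_edge {p : P3 V} {e : Sym2 V} (he : e ∈ p.edges) : p.y ∈ e := by
  rw [mem_edges_iff] at he
  rcases he with rfl | rfl <;> simp

lemma Esub_struct {c : P3 V → Prop} {e : Sym2 V} (he : e ∈ Esub (psel P c)) :
    ∃ p ∈ P, c p ∧ e ∈ p.edges := by
  obtain ⟨p, hp, hep⟩ := Finset.mem_biUnion.1 he
  obtain ⟨hpP, hc⟩ := Finset.mem_filter.1 hp
  exact ⟨p, hpP, hc, hep⟩

lemma X2_struct {e : Sym2 V} (he : e ∈ X2 P M) :
    ∃ p ∈ P, cls2 M p ∧ e ∈ p.edges := by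
  obtain ⟨p, hp, rfl⟩ := Finset.mem_image.1 he
  obtain ⟨hpP, hc⟩ := Finset.mem_filter.1 hp
  refine ⟨p, hpP, hc, ?_⟩
  rw [mem_edges_iff]
  split_ifs
  · exact Or.inl rfl
  · exact Or.inr rfl

lemma X34_struct {e : Sym2 V} (he : e = heavy w p) : e ∈ p.edges := by
  rw [he, heavy, mem_edges_iff]
  split_ifs
  · exact Or.inl rfl
  · exact Or.inr rfl

lemma X3_struct {e : Sym2 V} (he : e ∈ X3 w P M) :
    ∃ p ∈ P, cls3 M p ∧ e ∈ p.edges := by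
  obtain ⟨p, hp, rfl⟩ := Finset.mem_image.1 he
  obtain ⟨hpP, hc⟩ := Finset.mem_filter.1 hp
  exact ⟨p, hpP, hc, X34_struct rfl⟩

lemma X4_struct {e : Sym2 V} (he : e ∈ X4 w P M) :
    ∃ p ∈ P, cls4 M p ∧ e ∈ p.edges := by
  obtain ⟨p, hp, rfl⟩ := Finset.mem_image.1 he
  obtain ⟨hpP, hc⟩ := Finset.mem_filter.1 hp
  exact ⟨p, hpP, hc, X34_struct rfl⟩

lemma X7_struct {e : Sym2 V} (he : e ∈ X7 P M) :
    ∃ p ∈ P, cls7 M p ∧ e ∈ p.edges := by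
  obtain ⟨p, hp, rfl⟩ := Finset.mem_image.1 he
  obtain ⟨hpP, hc⟩ := Finset.mem_filter.1 hp
  refine ⟨p, hpP, hc, ?_⟩
  rw [mem_edges_iff]
  split_ifs
  · exact Or.inr rfl
  · exact Or.inl rfl

lemma edge_sets_disjoint
    (hd : ∀ p ∈ P, ∀ q ∈ P, p ≠ q → Disjoint p.verts q.verts)
    {c c' : P3 V → Prop} (S T : Finset (Sym2 V))
    (hS : ∀ e ∈ S, ∃ p ∈ P, c p ∧ e ∈ p.edges)
    (hT : ∀ e ∈ T, ∃ p ∈ P, c' p ∧ e ∈ p.edges)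
    (hcc : ∀ p : P3 V, c p → c' p → False) : Disjoint S T := by
  rw [Finset.disjoint_left]
  intro e heS heT
  obtain ⟨p, hpP, hcp, hep⟩ := hS e heS
  obtain ⟨q, hqP, hcq, heq⟩ := hT e heT
  have hy : p.y ∈ e := y_mem_edge hep
  have h1 : p.y ∈ q.verts := mem_verts_of_mem_edges heq hy
  have : p = q := path_eq hd hpP hqP (mem_verts_y p) h1
  exact hcc p hcp (this ▸ hcq)

lemma cw_eq_sub (w : Sym2 V → ℝ) (M : Finset (Sym2 V)) (F : Finset (Sym2 V)) :
    cw w M F = ew w F - ∑ e ∈ F, dft w M e := by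
  rw [cw, ew, ← Finset.sum_sub_distrib]
  exact Finset.sum_congr rfl fun e _ => by rw [dft]; ring

/-- sum over the edges of paths in a class filter. -/
lemma Dsum_biUnion
    (hd : ∀ p ∈ P, ∀ q ∈ P, p ≠ q → Disjoint p.verts q.verts)
    (c : P3 V → Prop) (g : Sym2 V → ℝ) :
    ∑ e ∈ Esub (psel P c), g e =
      ∑ p ∈ psel P c, (g s(p.x, p.y) + g s(p.y, p.z)) := by
  rw [Esub, Finset.sum_biUnion]
  · refine Finset.sum_congr rfl fun p _ => ?_
    rw [P3.edges, Finset.sum_pair (edges_ne p)]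
  · intro p hp q hq hne
    have hpP : p ∈ P := (Finset.mem_filter.1 (Finset.mem_coe.1 hp)).1
    have hqP : q ∈ P := (Finset.mem_filter.1 (Finset.mem_coe.1 hq)).1
    show Disjoint p.edges q.edges
    rw [Finset.disjoint_left]
    intro e hep heq
    have hy : p.y ∈ e := y_mem_edge hep
    exact hne (path_eq hd hpP hqP (mem_verts_y p) (mem_verts_of_mem_edges heq hy))

lemma sum_image_sel (hd : ∀ p ∈ P, ∀ q ∈ P, p ≠ q → Disjoint p.verts q.verts)
    (sel : P3 V → Sym2 V) (hsel : ∀ p : P3 V, sel p ∈ p.edges)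
    (c : P3 V → Prop) (g : Sym2 V → ℝ) :
    ∑ e ∈ (psel P c).image sel, g e = ∑ p ∈ psel P c, g (sel p) := by
  refine Finset.sum_image ?_
  intro p hp q hq heq
  have hpP : p ∈ P := (Finset.mem_filter.1 hp).1
  have hqP : q ∈ P := (Finset.mem_filter.1 hq).1
  have hy : p.y ∈ sel q := heq ▸ y_mem_edge (hsel p)
  exact path_eq hd hpP hqP (mem_verts_y p) (mem_verts_of_mem_edges (hsel q) hy)

end Aux8
theorem statement_12 (n : ℕ) (hn : Fintype.card V = n) (h3 : 3 ∣ n)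
    (w : Sym2 V → ℝ) (hw : ∀ e : Sym2 V, 0 ≤ w e)
    (M : Finset (Sym2 V)) (hM : IsMaxMatchingOfSize w (n / 3) M)
    (Pstar : Finset (P3 V)) (hP : IsMaxPacking w Pstar) (hAss : Ass Pstar M) :
    ew w (Esub (psel Pstar (cls6 M))) + ew w (Esub (psel Pstar (cls8 M))) +
      ew w (X2 Pstar M) + ew w (X3 w Pstar M) + ew w (X4 w Pstar M) + ew w (X5 Pstar M) +
      ew w (X7 Pstar M) - (4 / 3 : ℝ) * ew w M + (1 / 3 : ℝ) * ew w (Mset1' Pstar M) +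
      (2 / 3 : ℝ) * ew w (Mset1'' Pstar M) + ew w (Mset1''' Pstar M) +
      (2 / 3 : ℝ) * ew w (Mset2 Pstar M) + ew w (Mset3 Pstar M) +
      (4 / 3 : ℝ) * ew w (Mset4 Pstar M) ≤
      cw w M (Esub (psel Pstar (cls6 M)) ∪ Esub (psel Pstar (cls8 M))) +
        cw w M (X2 Pstar M ∪ X3 w Pstar M ∪ X4 w Pstar M ∪ X7 Pstar M) +
        cw w M (X5 Pstar M) := by
  have hm : IsMatching M := hM.1
  have hd := hP.1.2.1
  have hcov := hP.1.2.2
  -- disjointness of the edge sets appearing in the unions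
  have hdis68 : Disjoint (Esub (psel Pstar (cls6 M))) (Esub (psel Pstar (cls8 M))) :=
    edge_sets_disjoint hd _ _ (fun e he => Esub_struct he) (fun e he => Esub_struct he)
      (fun p h6 h8 => cls6_not_cls8 h6 h8)
  have hdis23 : Disjoint (X2 Pstar M) (X3 w Pstar M) :=
    edge_sets_disjoint hd _ _ (fun e he => X2_struct he) (fun e he => X3_struct he)
      (fun p h2 h3 => h2.2 h3.2)
  have hdis24 : Disjoint (X2 Pstar M) (X4 w Pstar M) :=
    edge_sets_disjoint hd _ _ (fun e he => X2_struct he) (fun e he => X4_struct he)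
      (fun p h2 h4 => by have := h2.1; have := h4.1; omega)
  have hdis34 : Disjoint (X3 w Pstar M) (X4 w Pstar M) :=
    edge_sets_disjoint hd _ _ (fun e he => X3_struct he) (fun e he => X4_struct he)
      (fun p h2 h4 => by have := h2.1; have := h4.1; omega)
  have hdis27 : Disjoint (X2 Pstar M) (X7 Pstar M) :=
    edge_sets_disjoint hd _ _ (fun e he => X2_struct he) (fun e he => X7_struct he)
      (fun p h2 h7 => by have := h2.1; have := h7.1; omega)
  have hdis37 : Disjoint (X3 w Pstar M) (X7 Pstar M) :=
    edge_sets_disjoint hd _ _ (fun e he => X3_struct he) (fun e he => X7_struct he)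
      (fun p h2 h7 => by have := h2.1; have := h7.1; omega)
  have hdis47 : Disjoint (X4 w Pstar M) (X7 Pstar M) :=
    edge_sets_disjoint hd _ _ (fun e he => X4_struct he) (fun e he => X7_struct he)
      (fun p h2 h7 => by have := h2.1; have := h7.1; omega)
  -- split the cw terms
  have hsplit1 : cw w M (Esub (psel Pstar (cls6 M)) ∪ Esub (psel Pstar (cls8 M))) =
      (ew w (Esub (psel Pstar (cls6 M))) - ∑ e ∈ Esub (psel Pstar (cls6 M)), dft w M e) +
      (ew w (Esub (psel Pstar (cls8 M))) - ∑ e ∈ Esub (psel Pstar (cls8 M)), dft w M e) := by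
    rw [← cw_eq_sub, ← cw_eq_sub, cw, cw, cw, Finset.sum_union hdis68]
  have hdis234 : Disjoint (X2 Pstar M ∪ X3 w Pstar M) (X4 w Pstar M) :=
    Finset.disjoint_union_left.2 ⟨hdis24, hdis34⟩
  have hdis2347 : Disjoint (X2 Pstar M ∪ X3 w Pstar M ∪ X4 w Pstar M) (X7 Pstar M) :=
    Finset.disjoint_union_left.2 ⟨Finset.disjoint_union_left.2 ⟨hdis27, hdis37⟩, hdis47⟩
  have hsplit2 : cw w M (X2 Pstar M ∪ X3 w Pstar M ∪ X4 w Pstar M ∪ X7 Pstar M) =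
      (ew w (X2 Pstar M) - ∑ e ∈ X2 Pstar M, dft w M e) +
      (ew w (X3 w Pstar M) - ∑ e ∈ X3 w Pstar M, dft w M e) +
      (ew w (X4 w Pstar M) - ∑ e ∈ X4 w Pstar M, dft w M e) +
      (ew w (X7 Pstar M) - ∑ e ∈ X7 Pstar M, dft w M e) := by
    rw [← cw_eq_sub, ← cw_eq_sub, ← cw_eq_sub, ← cw_eq_sub, cw, cw, cw, cw, cw,
      Finset.sum_union hdis2347, Finset.sum_union hdis234, Finset.sum_union hdis23]
  have hsplit3 : cw w M (X5 Pstar M) = ew w (X5 Pstar M) - ∑ e ∈ X5 Pstar M, dft w M e :=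
    cw_eq_sub w M _
  -- the X2, X3, X4, X5 defect sums vanish
  have hD2 : ∑ e ∈ X2 Pstar M, dft w M e = 0 :=
    Finset.sum_eq_zero fun e he => by
      obtain ⟨p, hp, rfl⟩ := Finset.mem_image.1 he
      exact dft_X2sel (Finset.mem_filter.1 hp).2
  have hD3 : ∑ e ∈ X3 w Pstar M, dft w M e = 0 :=
    Finset.sum_eq_zero fun e he => by
      obtain ⟨p, hp, rfl⟩ := Finset.mem_image.1 he
      exact dft_X3sel (Finset.mem_filter.1 hp).2
  have hD4 : ∑ e ∈ X4 w Pstar M, dft w M e = 0 :=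
    Finset.sum_eq_zero fun e he => by
      obtain ⟨p, hp, rfl⟩ := Finset.mem_image.1 he
      exact dft_X4sel (Finset.mem_filter.1 hp).2
  have hD5 : ∑ e ∈ X5 Pstar M, dft w M e = 0 :=
    Finset.sum_eq_zero fun e he => by
      obtain ⟨p, hp, rfl⟩ := Finset.mem_image.1 he
      exact dft_X5sel (Finset.mem_filter.1 hp).2
  -- charge bounds for the classes 6, 7, 8
  have hD6 : ∑ e ∈ Esub (psel Pstar (cls6 M)), dft w M e ≤
      ∑ p ∈ psel Pstar (cls6 M), phi w M p := by
    rw [Dsum_biUnion hd]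
    exact Finset.sum_le_sum fun p hp => charge6 hw (Finset.mem_filter.1 hp).2
  have hD8 : ∑ e ∈ Esub (psel Pstar (cls8 M)), dft w M e ≤
      ∑ p ∈ psel Pstar (cls8 M), phi w M p := by
    rw [Dsum_biUnion hd]
    refine Finset.sum_le_sum fun p hp => ?_
    have h8 := (Finset.mem_filter.1 hp).2
    exact charge8 hw h8 (fun h6 => cls6_not_cls8 h6 h8) (fun h7 => cls7_not_cls8 h7 h8)
  have hD7 : ∑ e ∈ X7 Pstar M, dft w M e ≤ ∑ p ∈ psel Pstar (cls7 M), phi w M p := by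
    have hsel : ∀ p : P3 V,
        (if s(p.x, p.y) ∈ M then s(p.y, p.z) else s(p.x, p.y)) ∈ p.edges := by
      intro p
      rw [mem_edges_iff]
      split_ifs
      · exact Or.inr rfl
      · exact Or.inl rfl
    rw [X7, sum_image_sel hd _ hsel]
    refine Finset.sum_le_sum fun p hp => ?_
    have h7 := (Finset.mem_filter.1 hp).2
    exact charge7 hw h7 (fun h6 => cls6_not_cls7 h6 h7)
  -- merge the three phi sums into a sum over all of Pstar
  have hmerge : ∑ p ∈ psel Pstar (cls6 M), phi w M p + ∑ p ∈ psel Pstar (cls7 M), phi w M p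
      + ∑ p ∈ psel Pstar (cls8 M), phi w M p ≤ ∑ p ∈ Pstar, phi w M p := by
    rw [psel, psel, psel, Finset.sum_filter, Finset.sum_filter, Finset.sum_filter,
      ← Finset.sum_add_distrib, ← Finset.sum_add_distrib]
    refine Finset.sum_le_sum fun p hp => ?_
    have hnn := phi_nonneg (w := w) hw M p
    by_cases h6 : cls6 M p
    · rw [if_pos h6, if_neg (cls6_not_cls7 h6), if_neg (cls6_not_cls8 h6)]
      linarith
    · by_cases h7 : cls7 M p
      · rw [if_neg h6, if_pos h7, if_neg (cls7_not_cls8 h7)]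
        linarith
      · by_cases h8 : cls8 M p
        · rw [if_neg h6, if_neg h7, if_pos h8]
          linarith
        · rw [if_neg h6, if_neg h7, if_neg h8]
          linarith
  -- convert to a vertex sum
  have hvert : ∑ p ∈ Pstar, phi w M p =
      ∑ v : V, rho M Pstar v * w (eMatch M v) := by
    rw [show (∑ p ∈ Pstar, phi w M p)
        = ∑ p ∈ Pstar, ∑ v : V, rloc M p v * w (eMatch M v) from rfl,
      Finset.sum_comm]
    refine Finset.sum_congr rfl fun v _ => ?_
    rw [rho, Finset.sum_mul]
  -- restrict to covered vertices
  have hrestr : ∑ v : V, rho M Pstar v * w (eMatch M v) =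
      ∑ v ∈ Finset.univ.filter (covered M), rho M Pstar v * w (eMatch M v) := by
    refine (Finset.sum_subset (Finset.filter_subset _ _) fun v _ hnv => ?_).symm
    have : ¬ covered M v := fun hc => hnv (Finset.mem_filter.2 ⟨Finset.mem_univ v, hc⟩)
    rw [rho_zero_of_not_covered this, zero_mul]
  -- fiber over the matching edges
  have hfibr : ∑ v ∈ Finset.univ.filter (covered M), rho M Pstar v * w (eMatch M v) =
      ∑ f ∈ M, ∑ v ∈ (Finset.univ.filter (covered M)).filter (fun v => eMatch M v = f),
        rho M Pstar v * w (eMatch M v) := by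
    exact (Finset.sum_fiberwise_of_maps_to (g := fun v => eMatch M v)
      (fun v hv => (eMatch_mem ((Finset.mem_filter.1 hv).2)).1) _).symm
    -- rewrite the correction terms as sums over M
  have hcorr : ∀ T : Finset (Sym2 V), T ⊆ M →
      ew w T = ∑ f ∈ M, (if f ∈ T then w f else 0) := by
    intro T hT
    rw [ew, Finset.sum_ite_mem, Finset.inter_eq_right.2 hT]
  have hsub1 : Mset1 Pstar M ⊆ M := Finset.filter_subset _ _
  have hc1' := hcorr _ (Mset1'_subset.trans hsub1)
  have hc1'' := hcorr _ (Mset1''_subset.trans hsub1)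
  have hc1''' := hcorr _ (Mset1'''_subset.trans hsub1)
  have hc2 := hcorr (Mset2 Pstar M) (Finset.filter_subset _ _)
  have hc3 := hcorr (Mset3 Pstar M) Finset.inter_subset_left
  have hc4 := hcorr (Mset4 Pstar M) Finset.inter_subset_left
  -- key bound summed over all matching edges
  have hkey : ∑ f ∈ M,
      ((∑ v ∈ (Finset.univ.filter (covered M)).filter (fun v => eMatch M v = f),
          rho M Pstar v * w (eMatch M v))
        + (1/3 : ℝ) * (if f ∈ Mset1' Pstar M then w f else 0)
        + (2/3 : ℝ) * (if f ∈ Mset1'' Pstar M then w f else 0)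
        + (if f ∈ Mset1''' Pstar M then w f else 0)
        + (2/3 : ℝ) * (if f ∈ Mset2 Pstar M then w f else 0)
        + (if f ∈ Mset3 Pstar M then w f else 0)
        + (4/3 : ℝ) * (if f ∈ Mset4 Pstar M then w f else 0))
      ≤ ∑ f ∈ M, (4/3 : ℝ) * w f :=
    Finset.sum_le_sum fun f hf => key_f hm hd hcov hw f hf
  have hexp : ∑ f ∈ M,
      ((∑ v ∈ (Finset.univ.filter (covered M)).filter (fun v => eMatch M v = f),
          rho M Pstar v * w (eMatch M v))
        + (1/3 : ℝ) * (if f ∈ Mset1' Pstar M then w f else 0)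
        + (2/3 : ℝ) * (if f ∈ Mset1'' Pstar M then w f else 0)
        + (if f ∈ Mset1''' Pstar M then w f else 0)
        + (2/3 : ℝ) * (if f ∈ Mset2 Pstar M then w f else 0)
        + (if f ∈ Mset3 Pstar M then w f else 0)
        + (4/3 : ℝ) * (if f ∈ Mset4 Pstar M then w f else 0))
      = (∑ f ∈ M, ∑ v ∈ (Finset.univ.filter (covered M)).filter (fun v => eMatch M v = f),
          rho M Pstar v * w (eMatch M v))
        + (1/3 : ℝ) * (∑ f ∈ M, if f ∈ Mset1' Pstar M then w f else 0)
        + (2/3 : ℝ) * (∑ f ∈ M, if f ∈ Mset1'' Pstar M then w f else 0)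
        + (∑ f ∈ M, if f ∈ Mset1''' Pstar M then w f else 0)
        + (2/3 : ℝ) * (∑ f ∈ M, if f ∈ Mset2 Pstar M then w f else 0)
        + (∑ f ∈ M, if f ∈ Mset3 Pstar M then w f else 0)
        + (4/3 : ℝ) * (∑ f ∈ M, if f ∈ Mset4 Pstar M then w f else 0) := by
    simp only [Finset.sum_add_distrib, ← Finset.mul_sum]
  have hewM : ∑ f ∈ M, (4/3 : ℝ) * w f = (4/3 : ℝ) * ew w M := by
    rw [ew, Finset.mul_sum]
  linarith [hkey, hexp, hewM, hsplit1, hsplit2, hsplit3, hD2, hD3, hD4, hD5,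
    hD6, hD7, hD8, hmerge, hvert, hrestr, hfibr, hc1', hc1'', hc1''', hc2, hc3, hc4]
end MW3PP
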